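/- Let b = (b_1, …, b_p) be a composition of n into p non-negative parts. Then ℓ(w_b) = ∑_{1 ≤ i < j ≤ p} b_i b_j, where ℓ(w) denotes the number of inversions of w, ℓ(w) = #{(i,j) : 1 ≤ i < j ≤ n, w(i) > w(j)}. -/

import Mathlib

namespace SymStmt

/-- The simple transposition `s_i = (i, i+1)`, as a permutation of `ℕ`
(only the indices `1 ≤ i < n` are ever used). -/
def s (i : ℕ) : Equiv.Perm ℕ := Equiv.swap i (i + 1)

/-- `w^{⟨k⟩}_{a,b} = (s_{a+b+k-1} s_{a+b+k-2} ⋯ s_{k+1})^b`, where in a word the leftmost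
letter is applied first; thus the underlying cycle is `s_{k+1} ∘ s_{k+2} ∘ ⋯ ∘ s_{a+b+k-1}`,
i.e. the product of the list `[s_{k+1}, s_{k+2}, …, s_{a+b+k-1}]`. -/
def wk (k a b : ℕ) : Equiv.Perm ℕ :=
  (((List.range (a + b - 1)).map fun j => s (k + 1 + j)).prod) ^ b

/-- The length of `w` as an element of `S_n`: the number of inversions
`#{(i,j) : 1 ≤ i < j ≤ n, w i > w j}`. -/
def len (n : ℕ) (w : Equiv.Perm ℕ) : ℕ :=
  ((Finset.Icc 1 n ×ˢ Finset.Icc 1 n).filter fun x => x.1 < x.2 ∧ w x.2 < w x.1).card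

/-- Partial sums `b_i^j = b_i + b_{i+1} + ⋯ + b_j` (equal to `0` if `i > j`). -/
def Bsum (b : ℕ → ℕ) (i j : ℕ) : ℕ := ∑ t ∈ Finset.Icc i j, b t

/-- `w_b` for a composition `b = (b_1, …, b_p)`: the composite obtained by applying
`w^{⟨b_1^{t-1}⟩}_{b_t, b_{t+1}^p}` successively for `t = p-1, p-2, …, 1` (the factor with
`t = p-1` applied first, the factor with `t = 1` applied last). -/
def wcomp (p : ℕ) (b : ℕ → ℕ) : Equiv.Perm ℕ :=
  ((List.range (p - 1)).map fun x => wk (Bsum b 1 x) (b (x + 1)) (Bsum b (x + 2) p)).prod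

end SymStmt

/-! Blocks of positions: block `t` (0-based) is `Bsum b 1 t < x ≤ Bsum b 1 (t + 1)`. The factor
`wk k a m` is the `m`-th power of the cycle `(k+1 k+2 … k+a+m)`, so it exchanges the adjacent
segments of lengths `a` and `m` after `k` rigidly. Composing these, `w_b` moves each block rigidly
to the positions just after the total size `Bsum b (t + 2) p` of the later blocks: it reverses the
order of the blocks and keeps each block increasing. Hence `x < y` is an inversion exactly when
`y` lies in a later block than `x`, and each point of block `t` has `Bsum b (t + 2) p` such
partners. -/

namespace SymStmt

open Finset

section Bsum

variable (b : ℕ → ℕ)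

lemma Bsum_of_lt {i j : ℕ} (h : j < i) : Bsum b i j = 0 := by
  rw [Bsum, Icc_eq_empty_of_lt h, sum_empty]

lemma Bsum_le_Bsum {i i' j j' : ℕ} (hi : i' ≤ i) (hj : j ≤ j') :
    Bsum b i j ≤ Bsum b i' j' :=
  sum_le_sum_of_subset (Icc_subset_Icc hi hj)

lemma monotone_Bsum (i : ℕ) : Monotone (Bsum b i) := fun _ _ h => Bsum_le_Bsum b le_rfl h

lemma Bsum_add_Bsum {i j k : ℕ} (hij : i ≤ j) (hjk : j ≤ k) :
    Bsum b (i + 1) j + Bsum b (j + 1) k = Bsum b (i + 1) k := by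
  simp only [Bsum, Icc_add_one_left_eq_Ioc]
  exact sum_Ioc_consecutive b hij hjk

lemma Bsum_succ_right {i j : ℕ} (h : i ≤ j + 1) : Bsum b i (j + 1) = Bsum b i j + b (j + 1) :=
  sum_Icc_succ_top h b

lemma add_Bsum_succ_left {i j : ℕ} (h : i < j) :
    b (i + 1) + Bsum b (i + 2) j = Bsum b (i + 1) j := by
  rw [← Bsum_add_Bsum b (Nat.le_add_right i 1) h]
  simp [Bsum]

end Bsum

section wk

lemma prod_map_s_range (k r : ℕ) :
    ((List.range r).map fun j => s (k + 1 + j)).prod = (List.range' (k + 1) (r + 1)).formPerm := by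
  induction r generalizing k with
  | zero => simp
  | succ r ih =>
    rw [List.range_succ_eq_map, List.map_cons, List.map_map, List.prod_cons, List.range'_succ,
      List.range'_succ, List.formPerm_cons_cons, ← List.range'_succ, ← ih]
    congr 3
    funext j
    rw [Function.comp_apply, Nat.succ_eq_add_one, add_comm j, ← add_assoc]

lemma wk_eq_formPerm_pow (k a m : ℕ) : wk k a m = (List.range' (k + 1) (a + m)).formPerm ^ m := by
  rcases Nat.eq_zero_or_pos m with rfl | hm
  · rfl
  · rw [wk, prod_map_s_range, Nat.sub_add_cancel (by omega)]

lemma wk_apply_of_lt {k a m i : ℕ} (hi : i < a + m) :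
    wk k a m (k + 1 + i) = k + 1 + (i + m) % (a + m) := by
  have := List.formPerm_pow_apply_getElem _ (List.nodup_range' (s := k + 1) (n := a + m)) m i
    (by simpa using hi)
  simpa [wk_eq_formPerm_pow, List.getElem_range'_1] using this

lemma wk_apply_eq_self {k a m x : ℕ} (hx : x ≤ k) : wk k a m x = x := by
  rw [wk_eq_formPerm_pow]
  refine Equiv.Perm.pow_apply_eq_self_of_apply_eq_self (List.formPerm_apply_of_notMem ?_) m
  rw [List.mem_range'_1]
  omega

lemma wk_apply_eq_add {k a m x : ℕ} (h1 : k < x) (h2 : x ≤ k + a) : wk k a m x = x + m := by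
  obtain ⟨i, rfl⟩ : ∃ i, x = k + 1 + i := ⟨x - (k + 1), by omega⟩
  rw [wk_apply_of_lt (by omega), Nat.mod_eq_of_lt (by omega)]
  omega

lemma wk_apply_eq_sub {k a m x : ℕ} (h1 : k + a < x) (h2 : x ≤ k + a + m) :
    wk k a m x = x - a := by
  obtain ⟨i, rfl⟩ : ∃ i, x = k + 1 + i := ⟨x - (k + 1), by omega⟩
  rw [wk_apply_of_lt (by omega), Nat.mod_eq_sub_mod (by omega), Nat.mod_eq_of_lt (by omega)]
  omega

end wk

section wcomp

variable (p : ℕ) (b : ℕ → ℕ)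

def wcompTail (c k : ℕ) : Equiv.Perm ℕ :=
  ((List.range' c k).map fun x => wk (Bsum b 1 x) (b (x + 1)) (Bsum b (x + 2) p)).prod

lemma wcomp_eq_wcompTail : wcomp p b = wcompTail p b 0 (p - 1) := by
  rw [wcomp, wcompTail, List.range_eq_range']

lemma wcompTail_succ (c k : ℕ) :
    wcompTail p b c (k + 1) =
      wk (Bsum b 1 c) (b (c + 1)) (Bsum b (c + 2) p) * wcompTail p b (c + 1) k :=
  rfl

lemma wcompTail_apply_eq_self {c x : ℕ} (k : ℕ) (hx : x ≤ Bsum b 1 c) :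
    wcompTail p b c k x = x := by
  induction k generalizing c with
  | zero => rfl
  | succ k ih =>
    rw [wcompTail_succ, Equiv.Perm.mul_apply, ih (hx.trans (monotone_Bsum b 1 (by omega))),
      wk_apply_eq_self hx]

lemma wcompTail_apply {c t x : ℕ} (k : ℕ) (hp : c + k + 1 = p) (hct : c ≤ t) (htp : t < p)
    (hx1 : Bsum b 1 t < x) (hx2 : x ≤ Bsum b 1 (t + 1)) :
    wcompTail p b c k x = x - Bsum b 1 t + Bsum b 1 c + Bsum b (t + 2) p := by
  induction k generalizing c with
  | zero =>
    obtain rfl : t = c := by omega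
    rw [Bsum_of_lt b (by omega : p < t + 2)]
    show x = _
    omega
  | succ k ih =>
    have hPc := Bsum_succ_right b (i := 1) (j := c) (by omega)
    rw [wcompTail_succ, Equiv.Perm.mul_apply]
    rcases hct.eq_or_lt with rfl | hct
    · rw [wcompTail_apply_eq_self p b k hx2, wk_apply_eq_add hx1 (by omega)]
      omega
    · rw [ih (by omega) (by omega)]
      have hPt := Bsum_succ_right b (i := 1) (j := t) (by omega)
      have hQt := add_Bsum_succ_left b htp
      have hQ := Bsum_le_Bsum b (show c + 2 ≤ t + 1 by omega) (le_refl p)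
      rw [wk_apply_eq_sub (by omega) (by omega)]
      omega

lemma wcomp_apply {t x : ℕ} (htp : t < p) (hx1 : Bsum b 1 t < x) (hx2 : x ≤ Bsum b 1 (t + 1)) :
    wcomp p b x = x - Bsum b 1 t + Bsum b (t + 2) p := by
  rw [wcomp_eq_wcompTail, wcompTail_apply p b _ (by omega) (Nat.zero_le t) htp hx1 hx2,
    Bsum_of_lt b zero_lt_one, add_zero]

end wcomp

lemma exists_lt_and_mem_Ioc (P : ℕ → ℕ) {y : ℕ} :
    ∀ {m : ℕ}, P 0 < y → y ≤ P m → ∃ t < m, P t < y ∧ y ≤ P (t + 1)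
  | 0, h0, hm => absurd hm h0.not_ge
  | m + 1, h0, hm => by
    by_cases hy : y ≤ P m
    · obtain ⟨t, htm, ht⟩ := exists_lt_and_mem_Ioc P h0 hy
      exact ⟨t, htm.trans m.lt_succ_self, ht⟩
    · exact ⟨m, m.lt_succ_self, not_le.1 hy, hm⟩

lemma sum_Ioc_eq_sum_range_sum_Ioc {M : Type*} [AddCommMonoid M] (f : ℕ → M) {P : ℕ → ℕ}
    (hP : Monotone P) (m : ℕ) :
    ∑ x ∈ Ioc (P 0) (P m), f x = ∑ t ∈ range m, ∑ x ∈ Ioc (P t) (P (t + 1)), f x := by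
  induction m with
  | zero => simp
  | succ m ih =>
    rw [sum_range_succ, ← ih, sum_Ioc_consecutive f (hP m.zero_le) (hP m.le_succ)]

lemma len_eq_sum_card (n : ℕ) (w : Equiv.Perm ℕ) :
    len n w = ∑ x ∈ Icc 1 n, #{y ∈ Icc 1 n | x < y ∧ w y < w x} := by
  simp only [len, card_filter, sum_product]

lemma card_inversions_wcomp (p : ℕ) (b : ℕ → ℕ) {t x : ℕ} (htp : t < p)
    (hx1 : Bsum b 1 t < x) (hx2 : x ≤ Bsum b 1 (t + 1)) :
    #{y ∈ Icc 1 (Bsum b 1 p) | x < y ∧ wcomp p b y < wcomp p b x} = Bsum b (t + 2) p := by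
  suffices h : {y ∈ Icc 1 (Bsum b 1 p) | x < y ∧ wcomp p b y < wcomp p b x}
      = Ioc (Bsum b 1 (t + 1)) (Bsum b 1 p) by
    rw [h, Nat.card_Ioc, ← Bsum_add_Bsum b (Nat.zero_le (t + 1)) htp]
    exact Nat.add_sub_cancel_left _ _
  ext y
  simp only [mem_filter, mem_Icc, mem_Ioc]
  rw [wcomp_apply p b htp hx1 hx2]
  constructor
  · rintro ⟨⟨-, hy⟩, hxy, hwy⟩
    refine ⟨?_, hy⟩
    by_contra! hyt
    rw [wcomp_apply p b htp (hx1.trans hxy) hyt] at hwy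
    omega
  · rintro ⟨hty, hy⟩
    have h0 := monotone_Bsum b 1 (Nat.zero_le (t + 1))
    obtain ⟨u, hup, hu1, hu2⟩ := exists_lt_and_mem_Ioc (Bsum b 1) (h0.trans_lt hty) hy
    have htu : t < u := by
      by_contra! hut
      have := monotone_Bsum b 1 (show u + 1 ≤ t + 1 by omega)
      omega
    rw [wcomp_apply p b hup hu1 hu2]
    have hPu := Bsum_succ_right b (i := 1) (j := u) (by omega)
    have hQu := add_Bsum_succ_left b hup
    have hQ := Bsum_le_Bsum b (show t + 2 ≤ u + 1 by omega) (le_refl p)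
    refine ⟨⟨by omega, hy⟩, by omega, by omega⟩

lemma sum_Icc_sum_Ioc_mul (p : ℕ) (b : ℕ → ℕ) :
    ∑ i ∈ Icc 1 p, ∑ j ∈ Ioc i p, b i * b j =
      ∑ t ∈ range p, b (t + 1) * Bsum b (t + 2) p := by
  rw [range_eq_Ico, sum_Ico_add' (fun i => b i * Bsum b (i + 1) p), zero_add,
    Ico_add_one_right_eq_Icc]
  refine sum_congr rfl fun i _ => ?_
  rw [Bsum, Icc_add_one_left_eq_Ioc, mul_sum]

end SymStmt

open SymStmt Finset in
theorem stmt_8_general (n p : ℕ) (b : ℕ → ℕ)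
    (hb : Bsum b 1 p = n) :
    len n (wcomp p b) = ∑ i ∈ Finset.Icc 1 p, ∑ j ∈ Finset.Ioc i p, b i * b j := by
  subst hb
  calc len (Bsum b 1 p) (wcomp p b)
      = ∑ x ∈ Ioc (Bsum b 1 0) (Bsum b 1 p),
          #{y ∈ Icc 1 (Bsum b 1 p) | x < y ∧ wcomp p b y < wcomp p b x} := by
        rw [len_eq_sum_card, Bsum_of_lt b zero_lt_one, ← Icc_add_one_left_eq_Ioc, zero_add]
    _ = ∑ t ∈ range p, ∑ x ∈ Ioc (Bsum b 1 t) (Bsum b 1 (t + 1)), Bsum b (t + 2) p := by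
        rw [sum_Ioc_eq_sum_range_sum_Ioc _ (monotone_Bsum b 1)]
        refine sum_congr rfl fun t ht => sum_congr rfl fun x hx => ?_
        rw [mem_Ioc] at hx
        exact card_inversions_wcomp p b (mem_range.1 ht) hx.1 hx.2
    _ = ∑ t ∈ range p, b (t + 1) * Bsum b (t + 2) p := by
        refine sum_congr rfl fun t _ => ?_
        rw [sum_const, Nat.card_Ioc, Bsum_succ_right b (by omega), Nat.add_sub_cancel_left,
          smul_eq_mul]
    _ = _ := (sum_Icc_sum_Ioc_mul p b).symm

open SymStmt in
/-- Let `b = (b_1, ..., b_p)` be a composition of `n` into `p` non-negative parts.  Then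
`len(w_b) = ∑_{1 <= i < j <= p} b_i * b_j`, where `len w` is the number of inversions of `w`
among pairs `1 <= i < j <= n`. -/
theorem stmt_8 (n p : ℕ) (hn : 1 ≤ n) (hp : 2 ≤ p) (b : ℕ → ℕ)
    (hb : Bsum b 1 p = n) :
    len n (wcomp p b) = ∑ i ∈ Finset.Icc 1 p, ∑ j ∈ Finset.Ioc i p, b i * b j :=
  stmt_8_general n p b hb
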